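/- arXiv:2107.07921 — 2 statements merged into one kernel-verified Lean document; each statement's English description precedes it below -/
import Mathlib

section
/- Let E be a real inner product space and let p, p_o : ℝ → E be twice differentiable at t. Define d(t) = ‖p(t) − p_o(t)‖ and suppose d(t) ≠ 0. Then d is twice differentiable at t and, writing β₁ = (p(t) − p_o(t))/d(t), one has d''(t) = ⟨β₁, p''(t)⟩ + β₂, where β₂ = −⟨β₁, p_o''(t)⟩ + ‖p'(t) − p_o'(t)‖²/d(t) − ⟨β₁, p'(t) − p_o'(t)⟩²/d(t). In particular, the second derivative of the distance depends affinely on the acceleration p''(t) of the robot point. -/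
open scoped RealInnerProductSpace

/-- second derivative of the distance between a robot point `p`
and the human operator `p_o` is affine in the acceleration `p''(t)`
(equation (16) of the paper). -/
theorem stmt_1 {E : Type*} [NormedAddCommGroup E] [InnerProductSpace ℝ E]
    (p p_o : ℝ → E) (t : ℝ)
    (hp : Differentiable ℝ p) (hp2 : DifferentiableAt ℝ (deriv p) t)
    (hpo : Differentiable ℝ p_o) (hpo2 : DifferentiableAt ℝ (deriv p_o) t)
    (d : ℝ → ℝ) (hd : d = fun s => ‖p s - p_o s‖)
    (hne : d t ≠ 0)
    (β₁ : E) (hβ₁ : β₁ = (d t)⁻¹ • (p t - p_o t))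
    (β₂ : ℝ)
    (hβ₂ : β₂ = -⟪β₁, deriv (deriv p_o) t⟫
        + ‖deriv p t - deriv p_o t‖ ^ 2 / d t
        - ⟪β₁, deriv p t - deriv p_o t⟫ ^ 2 / d t) :
    DifferentiableAt ℝ d t ∧ DifferentiableAt ℝ (deriv d) t ∧
      deriv (deriv d) t = ⟪β₁, deriv (deriv p) t⟫ + β₂ := by
  set q : ℝ → E := fun s => p s - p_o s with hqdef
  have hq : Differentiable ℝ q := hp.sub hpo
  have hq' : deriv q = fun s => deriv p s - deriv p_o s := by
    funext s; exact deriv_sub (hp s) (hpo s)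
  have hq2 : DifferentiableAt ℝ (deriv q) t := by
    rw [hq']; exact hp2.sub hpo2
  have hq2' : deriv (deriv q) t = deriv (deriv p) t - deriv (deriv p_o) t := by
    rw [hq']; exact deriv_sub hp2 hpo2
  have hqt0 : q t ≠ 0 := by
    intro h
    apply hne
    rw [hd]; simp only; rw [show p t - p_o t = q t from rfl, h, norm_zero]
  have hdq : d = fun s => ‖q s‖ := hd
  -- norm as sqrt of inner
  have hnormsqrt : ∀ x : E, Real.sqrt ⟪x, x⟫ = ‖x‖ := by
    intro x
    rw [real_inner_self_eq_norm_mul_norm, Real.sqrt_mul_self (norm_nonneg _)]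
  -- key derivative formula
  have key : ∀ s : ℝ, q s ≠ 0 →
      HasDerivAt d (⟪q s, deriv q s⟫ / ‖q s‖) s := by
    intro s hs
    have hg : HasDerivAt (fun u => ⟪q u, q u⟫)
        (⟪q s, deriv q s⟫ + ⟪deriv q s, q s⟫) s :=
      (hq s).hasDerivAt.inner ℝ (hq s).hasDerivAt
    have hgs : (⟪q s, q s⟫ : ℝ) ≠ 0 := by
      exact (inner_self_ne_zero (𝕜 := ℝ)).2 hs
    have hsqrt := (Real.hasDerivAt_sqrt hgs).comp s hg
    have heq : ((fun x => Real.sqrt x) ∘ fun u => ⟪q u, q u⟫) = d := by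
      funext u; simp only [Function.comp_apply]; rw [hnormsqrt, hdq]
    rw [heq] at hsqrt
    refine hsqrt.congr_deriv ?_
    rw [hnormsqrt, real_inner_comm (deriv q s) (q s)]
    have hns : ‖q s‖ ≠ 0 := norm_ne_zero_iff.2 hs
    field_simp
    ring
  have hev : ∀ᶠ s in nhds t, q s ≠ 0 :=
    (hq.continuous.continuousAt).eventually_ne hqt0
  have hd1 : DifferentiableAt ℝ d t := (key t hqt0).differentiableAt
  -- deriv d eventually equals the formula
  have hderiv_ev : deriv d =ᶠ[nhds t] fun s => ⟪q s, deriv q s⟫ / ‖q s‖ := by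
    filter_upwards [hev] with s hs
    exact (key s hs).deriv
  -- differentiability of the formula at t
  have hN : HasDerivAt (fun s => ⟪q s, deriv q s⟫)
      (⟪q t, deriv (deriv q) t⟫ + ⟪deriv q t, deriv q t⟫) t :=
    (hq t).hasDerivAt.inner ℝ hq2.hasDerivAt
  have hDt : HasDerivAt d (⟪q t, deriv q t⟫ / ‖q t‖) t := key t hqt0
  have hD2 : HasDerivAt (fun s => ‖q s‖) (⟪q t, deriv q t⟫ / ‖q t‖) t := by
    rw [← hdq]; exact hDt
  have hnt : ‖q t‖ ≠ 0 := norm_ne_zero_iff.2 hqt0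
  have hquot : HasDerivAt (fun s => ⟪q s, deriv q s⟫ / ‖q s‖)
      (((⟪q t, deriv (deriv q) t⟫ + ⟪deriv q t, deriv q t⟫) * ‖q t‖
        - ⟪q t, deriv q t⟫ * (⟪q t, deriv q t⟫ / ‖q t‖)) / ‖q t‖ ^ 2) t :=
    hN.div hD2 hnt
  have hd2 : DifferentiableAt ℝ (deriv d) t :=
    (Filter.EventuallyEq.differentiableAt_iff hderiv_ev).2 hquot.differentiableAt
  refine ⟨hd1, hd2, ?_⟩
  have hval : deriv (deriv d) t =
      ((⟪q t, deriv (deriv q) t⟫ + ⟪deriv q t, deriv q t⟫) * ‖q t‖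
        - ⟪q t, deriv q t⟫ * (⟪q t, deriv q t⟫ / ‖q t‖)) / ‖q t‖ ^ 2 := by
    rw [hderiv_ev.deriv_eq]; exact hquot.deriv
  rw [hval, hβ₂, hβ₁]
  have hdt : d t = ‖q t‖ := by rw [hdq]
  have hqp : deriv p t - deriv p_o t = deriv q t := by rw [hq']
  have hpp : deriv (deriv p) t = deriv (deriv q) t + deriv (deriv p_o) t := by
    rw [hq2']; abel
  rw [hdt, hqp, hpp]
  simp only [real_inner_smul_left, inner_add_right, real_inner_self_eq_norm_sq]
  have h1 : (⟪q t, deriv q t⟫ : ℝ) * ⟪q t, deriv q t⟫ = ⟪q t, deriv q t⟫ ^ 2 := by ring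
  field_simp
  ring
end

section
/- Let E be a real inner product space, n ≥ 1, and let p : Fin (n+1) → E be a chain of points with total length L = ∑_{l=0}^{n−1} ‖p_{l+1} − p_l‖. Let p_o ∈ E and d_min ≥ 0, and suppose some point p* = p_j + r·(p_{j+1} − p_j) on the chain (j < n, r ∈ [0,1]) satisfies ‖p* − p_o‖ ≤ d_min. Let k₁, k₂ ≥ 0 and for each l < n let v_l : ℝ → ℝ be measurable. Then the cumulative safety index F = ∑_{l=0}^{n−1} ∫₀¹ ( k₁·‖p_l + r·(p_{l+1} − p_l) − p_o‖ + k₂·tanh(v_l(r)) ) dr satisfies F ≤ k₁·( ((2n+1)/2)·L + n·d_min ) + k₂·n. -/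
open MeasureTheory Finset

lemma tanh_le_one' (x : ℝ) : Real.tanh x ≤ 1 := by
  rw [Real.tanh_eq_sinh_div_cosh, div_le_one (Real.cosh_pos x)]
  exact le_of_lt (Real.sinh_lt_cosh x)

lemma tanh_abs_le_one (x : ℝ) : |Real.tanh x| ≤ 1 := by
  rw [abs_le]
  refine ⟨?_, tanh_le_one' x⟩
  have := tanh_le_one' (-x)
  rw [Real.tanh_neg] at this; linarith

lemma measurable_tanh' : Measurable Real.tanh := by
  have h : Real.tanh = fun x => Real.sinh x / Real.cosh x :=
    funext fun x => Real.tanh_eq_sinh_div_cosh x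
  rw [h]
  exact (Real.continuous_sinh.div Real.continuous_cosh
    (fun x => (Real.cosh_pos x).ne')).measurable

/-- single-robot appendix bound of the paper: if some point of
the chain is within distance `d_min` of the operator, the cumulative safety
index is at most `k₁((2n+1)/2·L + n·d_min) + k₂·n`. -/
theorem stmt_13 {E : Type*} [NormedAddCommGroup E] [InnerProductSpace ℝ E]
    (n : ℕ) (hn : 1 ≤ n)
    (p : Fin (n + 1) → E) (L : ℝ)
    (hL : L = ∑ l : Fin n, ‖p l.succ - p l.castSucc‖)
    (p_o : E) (d_min : ℝ) (hdmin : 0 ≤ d_min)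
    (j : Fin n) (r : ℝ) (hr : r ∈ Set.Icc (0 : ℝ) 1)
    (hclose : ‖p j.castSucc + r • (p j.succ - p j.castSucc) - p_o‖ ≤ d_min)
    (k₁ k₂ : ℝ) (hk₁ : 0 ≤ k₁) (hk₂ : 0 ≤ k₂)
    (v : Fin n → ℝ → ℝ) (hv : ∀ l, Measurable (v l))
    (F : ℝ)
    (hF : F = ∑ l : Fin n, ∫ s in (0 : ℝ)..1,
        (k₁ * ‖p l.castSucc + s • (p l.succ - p l.castSucc) - p_o‖
          + k₂ * Real.tanh (v l s))) :
    F ≤ k₁ * ((2 * n + 1) / 2 * L + n * d_min) + k₂ * n := by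
  have hL0 : 0 ≤ L := by rw [hL]; positivity
  -- extended vertex sequence
  have hfin : ∀ i : ℕ, min i n < n + 1 := fun i => Nat.lt_succ_of_le (min_le_right _ _)
  set f : ℕ → E := fun i => p ⟨min i n, hfin i⟩ with hf
  set g : ℕ → ℝ := fun i => dist (f i) (f (i + 1)) with hg
  have hg0 : ∀ i, 0 ≤ g i := fun i => dist_nonneg
  have hfc : ∀ i : Fin n, f i = p i.castSucc := by
    intro i
    have h1 : (⟨min (i : ℕ) n, hfin i⟩ : Fin (n + 1)) = i.castSucc := by
      ext; simp [Nat.min_eq_left (le_of_lt i.isLt)]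
    simp only [hf]
    exact congrArg p h1
  have hfs : ∀ i : Fin n, f ((i : ℕ) + 1) = p i.succ := by
    intro i
    have h1 : (⟨min ((i : ℕ) + 1) n, hfin _⟩ : Fin (n + 1)) = i.succ := by
      ext; simp [Nat.min_eq_left i.isLt]
    simp only [hf]
    exact congrArg p h1
  have hgΔ : ∀ i : Fin n, g i = ‖p i.succ - p i.castSucc‖ := by
    intro i
    simp [hg, hfc i, hfs i, dist_eq_norm, norm_sub_rev]
  -- any Ico-sum of g is at most L
  have hgL : ∀ a b : ℕ, (∑ i ∈ Finset.Ico a b, g i) ≤ L := by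
    intro a b
    have h1 : (∑ i ∈ Finset.Ico a b, g i) ≤ ∑ i ∈ Finset.range (max b n), g i := by
      apply Finset.sum_le_sum_of_subset_of_nonneg
      · intro i hi
        simp only [Finset.mem_Ico] at hi
        simp only [Finset.mem_range]
        exact lt_of_lt_of_le hi.2 (le_max_left _ _)
      · exact fun i _ _ => hg0 i
    have h2 : (∑ i ∈ Finset.range (max b n), g i) = ∑ i ∈ Finset.range n, g i := by
      refine (Finset.sum_subset (Finset.range_subset_range.2 (le_max_right _ _)) ?_).symm
      intro i _ hi
      simp only [Finset.mem_range, not_lt] at hi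
      have e1 : min i n = n := min_eq_right hi
      have e2 : min (i + 1) n = n := min_eq_right (le_trans hi (Nat.le_succ i))
      simp [hg, hf, e1, e2]
    have h3 : (∑ i ∈ Finset.range n, g i) = L := by
      rw [hL, ← Fin.sum_univ_eq_sum_range (fun i => g i) n]
      exact Finset.sum_congr rfl fun i _ => hgΔ i
    linarith
  have hdist : ∀ a b : ℕ, dist (f a) (f b) ≤ ∑ i ∈ Finset.Ico (min a b) (max a b), g i := by
    intro a b
    rcases le_total a b with h | h
    · rw [min_eq_left h, max_eq_right h]; exact dist_le_Ico_sum_dist f h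
    · rw [min_eq_right h, max_eq_left h, dist_comm]; exact dist_le_Ico_sum_dist f h
  -- key pointwise bound
  have hpoint : ∀ (l : Fin n), ∀ s ∈ Set.Icc (0 : ℝ) 1,
      ‖p l.castSucc + s • (p l.succ - p l.castSucc) - p_o‖ ≤ L + d_min := by
    intro l s hs
    obtain ⟨hs0, hs1⟩ := hs
    obtain ⟨hr0, hr1⟩ := hr
    set q := p l.castSucc + s • (p l.succ - p l.castSucc) with hq
    set q' := p j.castSucc + r • (p j.succ - p j.castSucc) with hq'
    have key : ‖q - q'‖ ≤ L := by
      have hΔl : (0:ℝ) ≤ ‖p l.succ - p l.castSucc‖ := norm_nonneg _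
      have hΔj : (0:ℝ) ≤ ‖p j.succ - p j.castSucc‖ := norm_nonneg _
      -- bound 1: through castSucc endpoints
      have b1 : ‖q - q'‖ ≤ s * ‖p l.succ - p l.castSucc‖ + dist (f l) (f j)
          + r * ‖p j.succ - p j.castSucc‖ := by
        have : q - q' = (s • (p l.succ - p l.castSucc))
            + (p l.castSucc - p j.castSucc) + (-(r • (p j.succ - p j.castSucc))) := by
          rw [hq, hq']; module
        rw [this]
        calc ‖s • (p l.succ - p l.castSucc) + (p l.castSucc - p j.castSucc)
              + -(r • (p j.succ - p j.castSucc))‖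
            ≤ ‖s • (p l.succ - p l.castSucc) + (p l.castSucc - p j.castSucc)‖
              + ‖-(r • (p j.succ - p j.castSucc))‖ := norm_add_le _ _
          _ ≤ ‖s • (p l.succ - p l.castSucc)‖ + ‖p l.castSucc - p j.castSucc‖
              + ‖-(r • (p j.succ - p j.castSucc))‖ := by
                have := norm_add_le (s • (p l.succ - p l.castSucc)) (p l.castSucc - p j.castSucc)
                linarith
          _ = s * ‖p l.succ - p l.castSucc‖ + dist (f l) (f j)
              + r * ‖p j.succ - p j.castSucc‖ := by
                rw [norm_neg, norm_smul, norm_smul, Real.norm_eq_abs, Real.norm_eq_abs,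
                  abs_of_nonneg hs0, abs_of_nonneg hr0, hfc l, hfc j, dist_eq_norm]
      -- bound 2: through succ endpoints
      have b2 : ‖q - q'‖ ≤ (1 - s) * ‖p l.succ - p l.castSucc‖
          + dist (f ((l:ℕ)+1)) (f ((j:ℕ)+1)) + (1 - r) * ‖p j.succ - p j.castSucc‖ := by
        have : q - q' = (-((1-s) • (p l.succ - p l.castSucc)))
            + (p l.succ - p j.succ) + ((1-r) • (p j.succ - p j.castSucc)) := by
          rw [hq, hq']; module
        rw [this]
        calc ‖-((1-s) • (p l.succ - p l.castSucc)) + (p l.succ - p j.succ)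
              + (1-r) • (p j.succ - p j.castSucc)‖
            ≤ ‖-((1-s) • (p l.succ - p l.castSucc)) + (p l.succ - p j.succ)‖
              + ‖(1-r) • (p j.succ - p j.castSucc)‖ := norm_add_le _ _
          _ ≤ ‖-((1-s) • (p l.succ - p l.castSucc))‖ + ‖p l.succ - p j.succ‖
              + ‖(1-r) • (p j.succ - p j.castSucc)‖ := by
                have := norm_add_le (-((1-s) • (p l.succ - p l.castSucc))) (p l.succ - p j.succ)
                linarith
          _ = (1 - s) * ‖p l.succ - p l.castSucc‖ + dist (f ((l:ℕ)+1)) (f ((j:ℕ)+1))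
              + (1 - r) * ‖p j.succ - p j.castSucc‖ := by
                rw [norm_neg, norm_smul, norm_smul, Real.norm_eq_abs, Real.norm_eq_abs,
                  abs_of_nonneg (by linarith), abs_of_nonneg (by linarith),
                  hfs l, hfs j, dist_eq_norm]
      -- combine: 2‖q-q'‖ ≤ gl + gj + D(m,M) + D(m+1,M+1) ≤ 2L
      set m := min (l:ℕ) (j:ℕ) with hm
      set M := max (l:ℕ) (j:ℕ) with hM
      have hd1 : dist (f l) (f j) ≤ ∑ i ∈ Finset.Ico m M, g i := hdist l j
      have hd2 : dist (f ((l:ℕ)+1)) (f ((j:ℕ)+1)) ≤ ∑ i ∈ Finset.Ico (m+1) (M+1), g i := by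
        have := hdist ((l:ℕ)+1) ((j:ℕ)+1)
        rwa [Nat.succ_min_succ, Nat.succ_max_succ] at this
      have hglgj : ‖p l.succ - p l.castSucc‖ + ‖p j.succ - p j.castSucc‖ = g m + g M := by
        rcases le_total (l:ℕ) (j:ℕ) with h | h
        · rw [hm, hM, min_eq_left h, max_eq_right h, hgΔ l, hgΔ j]
        · rw [hm, hM, min_eq_right h, max_eq_left h, hgΔ l, hgΔ j]; ring
      have hmM : m ≤ M := min_le_max
      have hfinal : g m + g M + (∑ i ∈ Finset.Ico m M, g i)
          + (∑ i ∈ Finset.Ico (m+1) (M+1), g i) ≤ 2 * L := by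
        rcases eq_or_lt_of_le hmM with h | h
        · have e1 : Finset.Ico m M = ∅ := by rw [h, Finset.Ico_self]
          have e2 : Finset.Ico (m+1) (M+1) = ∅ := by rw [h, Finset.Ico_self]
          have hx := hgL m (m+1)
          rw [Nat.Ico_succ_singleton, Finset.sum_singleton] at hx
          rw [e1, e2, Finset.sum_empty, ← h]
          linarith
        · have e1 : (∑ i ∈ Finset.Ico m M, g i) = g m + ∑ i ∈ Finset.Ico (m+1) M, g i :=
            Finset.sum_eq_sum_Ico_succ_bot h _
          have e2 : (∑ i ∈ Finset.Ico (m+1) (M+1), g i)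
              = (∑ i ∈ Finset.Ico (m+1) M, g i) + g M :=
            Finset.sum_Ico_succ_top h _
          have e3 : (∑ i ∈ Finset.Ico m (M+1), g i)
              = g m + ((∑ i ∈ Finset.Ico (m+1) M, g i) + g M) := by
            rw [Finset.sum_eq_sum_Ico_succ_bot (Nat.lt_succ_of_lt h) _,
              Finset.sum_Ico_succ_top h]
          have := hgL m (M+1)
          rw [e3] at this
          linarith
      linarith
    calc ‖q - p_o‖ ≤ ‖q - q'‖ + ‖q' - p_o‖ := by
          have := norm_add_le (q - q') (q' - p_o)
          simpa using this
      _ ≤ L + d_min := add_le_add key hclose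
  -- integrability
  have hcont : ∀ l : Fin n, Continuous fun s : ℝ =>
      k₁ * ‖p l.castSucc + s • (p l.succ - p l.castSucc) - p_o‖ := by
    intro l; fun_prop
  have hint : ∀ l : Fin n, IntervalIntegrable (fun s =>
      k₁ * ‖p l.castSucc + s • (p l.succ - p l.castSucc) - p_o‖
        + k₂ * Real.tanh (v l s)) volume 0 1 := by
    intro l
    apply IntervalIntegrable.add
    · exact (hcont l).intervalIntegrable 0 1
    · rw [intervalIntegrable_iff]
      have hb : IntegrableOn (fun _ : ℝ => |k₂| * 1) (Set.uIoc (0:ℝ) 1) volume := by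
        refine integrableOn_const ?_
        rw [Set.uIoc_of_le (by norm_num : (0:ℝ) ≤ 1)]
        exact measure_Ioc_lt_top.ne
      apply Integrable.mono' hb
      · exact ((measurable_tanh'.comp (hv l)).const_mul k₂).aestronglyMeasurable
      · filter_upwards with x
        rw [Real.norm_eq_abs, abs_mul]
        exact mul_le_mul_of_nonneg_left (tanh_abs_le_one _) (abs_nonneg k₂)
  -- per-link integral bound
  set C := k₁ * (L + d_min) + k₂ with hC
  have hCint : ∀ l : Fin n, (∫ s in (0:ℝ)..1,
      (k₁ * ‖p l.castSucc + s • (p l.succ - p l.castSucc) - p_o‖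
        + k₂ * Real.tanh (v l s))) ≤ C := by
    intro l
    have hmono := intervalIntegral.integral_mono_on (by norm_num : (0:ℝ) ≤ 1) (hint l)
      (intervalIntegrable_const (c := C)) ?_
    · have : (∫ _ in (0:ℝ)..1, C) = C := by simp
      linarith [hmono, this.symm.le]
    · intro x hx
      have h1 : k₁ * ‖p l.castSucc + x • (p l.succ - p l.castSucc) - p_o‖ ≤ k₁ * (L + d_min) :=
        mul_le_mul_of_nonneg_left (hpoint l x hx) hk₁
      have h2 : k₂ * Real.tanh (v l x) ≤ k₂ * 1 :=
        mul_le_mul_of_nonneg_left (tanh_le_one' _) hk₂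
      rw [hC]; linarith
  -- sum up
  have hsum : F ≤ n * C := by
    rw [hF]
    calc (∑ l : Fin n, ∫ s in (0:ℝ)..1,
          (k₁ * ‖p l.castSucc + s • (p l.succ - p l.castSucc) - p_o‖
            + k₂ * Real.tanh (v l s)))
        ≤ ∑ _l : Fin n, C := Finset.sum_le_sum fun l _ => hCint l
      _ = n * C := by simp [mul_comm]
  have hn' : (1:ℝ) ≤ (n:ℝ) := by exact_mod_cast hn
  have hk₁L : 0 ≤ k₁ * L := mul_nonneg hk₁ hL0
  rw [hC] at hsum
  nlinarith [hk₁L, hn', mul_nonneg hk₁ hdmin]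
end
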